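/- arXiv:1412.2997 — 7 statements merged into one kernel-verified Lean document; each statement's English description precedes it below -/
import Mathlib

section
/- For any natural number k ≥ 1, any vector x ∈ ℝ^k, and any K > 0, one has exp(K·(E_K(x) − E_{−K}(x))) − 1 ≤ (1/2)·(exp(K·(max x − min x)) − 1), where E_p denotes the log-exp mean with parameter p. -/
/-!
Put `a i = exp (K * x i)`, so that `a i` lies in `[m, M]` with `m = exp (K * min x)` and
`M = exp (K * max x)`. Then `exp (K * (E_K x - E_{-K} x))` is the product of the means of the `a i`
and of the `(a i)⁻¹`, i.e. the average of `a i / a j` over all pairs. Pairing `(i, j)` with `(j, i)`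
and bounding each `a i / a j + a j / a i` by `M / m + m / M` shows that this product is at most
`(M / m + m / M) / 2 ≤ (M / m + 1) / 2`.
-/

open Finset Set

noncomputable def logExpMean (p : ℝ) {k : ℕ} (x : Fin (k+1) → ℝ) : ℝ :=
  (1/p) * Real.log ((∑ i, Real.exp (p * x i)) / (k+1))

noncomputable def vmax {k : ℕ} (x : Fin (k+1) → ℝ) : ℝ :=
  Finset.univ.sup' Finset.univ_nonempty x

noncomputable def vmin {k : ℕ} (x : Fin (k+1) → ℝ) : ℝ :=
  Finset.univ.inf' Finset.univ_nonempty x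

lemma div_add_div_le_of_mem_Icc {m M a b : ℝ} (hm : 0 < m) (ha : a ∈ Icc m M)
    (hb : b ∈ Icc m M) : a / b + b / a ≤ M / m + m / M := by
  obtain ⟨hma, haM⟩ := ha
  obtain ⟨hmb, hbM⟩ := hb
  have ha0 : 0 < a := hm.trans_le hma
  have hb0 : 0 < b := hm.trans_le hmb
  have hM0 : 0 < M := ha0.trans_le haM
  rw [div_add_div _ _ hb0.ne' ha0.ne', div_add_div _ _ hm.ne' hM0.ne',
    div_le_div_iff₀ (by positivity) (by positivity)]
  -- the difference of the two sides, cross-multiplied, is `(M a - m b) (M b - m a) ≥ 0`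
  nlinarith [mul_nonneg (sub_nonneg.2 (mul_le_mul hmb haM ha0.le hb0.le))
    (sub_nonneg.2 (mul_le_mul hma hbM hb0.le ha0.le))]

lemma sum_mul_sum_inv_le {ι : Type*} [Fintype ι] {a : ι → ℝ} {m M : ℝ} (hm : 0 < m)
    (ha : ∀ i, a i ∈ Icc m M) :
    (∑ i, a i) * (∑ i, (a i)⁻¹) ≤ (Fintype.card ι : ℝ) ^ 2 * ((M / m + m / M) / 2) := by
  have hpairs : 2 * ((∑ i, a i) * (∑ i, (a i)⁻¹)) = ∑ i, ∑ j, (a i / a j + a j / a i) := by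
    simp only [div_eq_mul_inv, sum_add_distrib, sum_mul_sum]
    rw [sum_comm (f := fun i j => a j * (a i)⁻¹)]
    ring
  have hsum : ∑ i, ∑ j, (a i / a j + a j / a i) ≤ ∑ _i : ι, ∑ _j : ι, (M / m + m / M) :=
    sum_le_sum fun i _ => sum_le_sum fun j _ => div_add_div_le_of_mem_Icc hm (ha i) (ha j)
  simp only [sum_const, card_univ, nsmul_eq_mul] at hsum
  linarith

lemma mean_mul_mean_inv_sub_one_le {ι : Type*} [Fintype ι] [Nonempty ι] {a : ι → ℝ}
    {m M : ℝ} (hm : 0 < m) (ha : ∀ i, a i ∈ Icc m M) :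
    (∑ i, a i) / Fintype.card ι * ((∑ i, (a i)⁻¹) / Fintype.card ι) - 1 ≤ (M / m - 1) / 2 := by
  have hmM : m ≤ M := (ha (Classical.arbitrary ι)).1.trans (ha (Classical.arbitrary ι)).2
  have hratio : m / M ≤ 1 := div_le_one_of_le₀ hmM (hm.trans_le hmM).le
  calc (∑ i, a i) / Fintype.card ι * ((∑ i, (a i)⁻¹) / Fintype.card ι) - 1
      = (∑ i, a i) * (∑ i, (a i)⁻¹) / (Fintype.card ι : ℝ) ^ 2 - 1 := by
        rw [div_mul_div_comm, sq]
    _ ≤ (M / m + m / M) / 2 - 1 := by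
        refine sub_le_sub_right ?_ 1
        rw [div_le_iff₀ (by positivity)]
        linarith [sum_mul_sum_inv_le hm ha]
    _ ≤ (M / m - 1) / 2 := by linarith

lemma exp_mul_logExpMean {p : ℝ} (hp : p ≠ 0) {k : ℕ} (x : Fin (k+1) → ℝ) :
    Real.exp (p * logExpMean p x) = (∑ i, Real.exp (p * x i)) / (k+1) := by
  rw [logExpMean, ← mul_assoc, mul_one_div_cancel hp, one_mul, Real.exp_log (by positivity)]

lemma le_vmax {k : ℕ} (x : Fin (k+1) → ℝ) (i : Fin (k+1)) : x i ≤ vmax x :=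
  le_sup' x (mem_univ i)

lemma vmin_le {k : ℕ} (x : Fin (k+1) → ℝ) (i : Fin (k+1)) : vmin x ≤ x i :=
  inf'_le x (mem_univ i)

/-- exp(K(E_K(x) − E_{−K}(x))) − 1 ≤ ½(exp(K(max x − min x)) − 1). -/
theorem stmt1 (k : ℕ) (x : Fin (k+1) → ℝ) (K : ℝ) (hK : 0 < K) :
    Real.exp (K * (logExpMean K x - logExpMean (-K) x)) - 1
      ≤ (1/2) * (Real.exp (K * (vmax x - vmin x)) - 1) := by
  set a : Fin (k+1) → ℝ := fun i => Real.exp (K * x i)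
  have hmeans : Real.exp (K * (logExpMean K x - logExpMean (-K) x))
      = (∑ i, a i) / Fintype.card (Fin (k+1)) * ((∑ i, (a i)⁻¹) / Fintype.card (Fin (k+1))) := by
    rw [mul_sub, sub_eq_add_neg, ← neg_mul, Real.exp_add, exp_mul_logExpMean hK.ne',
      exp_mul_logExpMean (neg_ne_zero.2 hK.ne')]
    simp [a, ← Real.exp_neg]
  have ha : ∀ i, a i ∈ Icc (Real.exp (K * vmin x)) (Real.exp (K * vmax x)) := fun i =>
    ⟨Real.exp_le_exp.2 (mul_le_mul_of_nonneg_left (vmin_le x i) hK.le),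
      Real.exp_le_exp.2 (mul_le_mul_of_nonneg_left (le_vmax x i) hK.le)⟩
  rw [hmeans, mul_sub K, Real.exp_sub]
  linarith [mean_mul_mean_inv_sub_one_le (Real.exp_pos _) ha]
end

section
/- Let a_0 = a > 0, b_0 = b > 0 with b ≤ a, and define a_{n+1} = (a_n + b_n)/2, b_{n+1} = √(a_n·b_n). Then for every n, a_{n+1} − b_{n+1} ≤ (a_n − b_n)²/(8·b_0). In particular the difference a_n − b_n converges to 0 quadratically. -/
/-!
With `x = √a` and `y = √b` one step of the iteration is exact:
`(a + b)/2 - √(ab) = (x - y)²/2`, while `(a - b)² = (x - y)²(x + y)²`. Since `b ≤ a`, we have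
`(x + y)² ≥ 4y² = 4b`, and `b_n ≥ b_0` because the geometric means never decrease once `b_0 ≤ a_0`.
-/

namespace Real

theorem sqrt_mul_le_add_div_two {x y : ℝ} (hx : 0 ≤ x) (hy : 0 ≤ y) : √(x * y) ≤ (x + y) / 2 :=
  (sqrt_le_left (by positivity)).2 (by nlinarith [sq_nonneg (x - y)])

theorem le_sqrt_mul_of_le {x y : ℝ} (hy : 0 ≤ y) (hyx : y ≤ x) : y ≤ √(x * y) :=
  (le_sqrt hy (by nlinarith)).2 (by nlinarith)

theorem add_div_two_sub_sqrt_mul {x y : ℝ} (hx : 0 ≤ x) (hy : 0 ≤ y) :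
    (x + y) / 2 - √(x * y) = (√x - √y) ^ 2 / 2 := by
  rw [sqrt_mul hx, sub_sq, sq_sqrt hx, sq_sqrt hy]
  ring

theorem add_div_two_sub_sqrt_mul_le {c x y : ℝ} (hc : 0 < c) (hcy : c ≤ y) (hyx : y ≤ x) :
    (x + y) / 2 - √(x * y) ≤ (x - y) ^ 2 / (8 * c) := by
  have hy : 0 ≤ y := hc.le.trans hcy
  have hx : 0 ≤ x := hy.trans hyx
  have hdiff : x - y = (√x - √y) * (√x + √y) := by
    linear_combination sq_sqrt hy - sq_sqrt hx
  have hsum : 4 * c ≤ (√x + √y) ^ 2 := by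
    have : √y ≤ √x := sqrt_le_sqrt hyx
    nlinarith [sq_sqrt hy, sqrt_nonneg y]
  rw [add_div_two_sub_sqrt_mul hx hy, hdiff, le_div_iff₀ (by positivity)]
  nlinarith [mul_le_mul_of_nonneg_left hsum (sq_nonneg (√x - √y))]

end Real

theorem b_zero_le_b_and_b_le_a {a b : ℕ → ℝ} (hb0 : 0 < b 0) (hba : b 0 ≤ a 0)
    (hA : ∀ n, a (n + 1) = (a n + b n) / 2) (hB : ∀ n, b (n + 1) = √(a n * b n)) (n : ℕ) :
    b 0 ≤ b n ∧ b n ≤ a n := by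
  induction n with
  | zero => exact ⟨le_rfl, hba⟩
  | succ n ih =>
    obtain ⟨h0n, hba_n⟩ := ih
    have hbn : 0 ≤ b n := hb0.le.trans h0n
    rw [hA, hB]
    exact ⟨h0n.trans (Real.le_sqrt_mul_of_le hbn hba_n),
      Real.sqrt_mul_le_add_div_two (hbn.trans hba_n) hbn⟩

/-- for the arithmetic-geometric iteration starting from
    `a 0 ≥ b 0 > 0`, one has `a (n+1) − b (n+1) ≤ (a n − b n)² / (8 b 0)`. -/
theorem stmt2 (a b : ℕ → ℝ) (hb0 : 0 < b 0) (hba : b 0 ≤ a 0)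
    (hA : ∀ n, a (n+1) = (a n + b n) / 2)
    (hB : ∀ n, b (n+1) = Real.sqrt (a n * b n)) :
    ∀ n, a (n+1) - b (n+1) ≤ (a n - b n)^2 / (8 * b 0) := by
  intro n
  obtain ⟨h0n, hba_n⟩ := b_zero_le_b_and_b_le_a hb0 hba hA hB n
  rw [hA, hB]
  exact Real.add_div_two_sub_sqrt_mul_le hb0 h0n hba_n
end

section
/- Let f ∈ C²(I) with f′ ≠ 0 on an interval I, and suppose |f″/f′| ≤ K on I for some K > 0. Then for every k ∈ ℕ and every x ∈ I^k, E_{−K}(x) ≤ M_f(x) ≤ E_K(x), where M_f is the quasi-arithmetic mean generated by f and E_p is the log-exp mean with parameter p. -/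
/-!
Put `u = exp (p t)`. The function `F u = f (log u / p)` has second derivative
`(f'' - p f') / (p u) ^ 2`, so for increasing `f` the bound `f'' ≤ K f'` makes `F` concave on
`exp (K • I)`, and Jensen's inequality for `F` at the points `exp (K xᵢ)` gives `f M ≤ f (E_K x)`.
The lower bound is the same argument applied to `t ↦ -f (-t)` with `p = -K`. By Darboux's theorem
`f'` has constant sign, and a decreasing `f` is replaced by `-f`.
-/

open Real Set

open scoped Pointwise in
lemma HasDerivWithinAt.comp_neg {f : ℝ → ℝ} {f' x : ℝ} {s : Set ℝ}
    (hf : HasDerivWithinAt f f' s (-x)) : HasDerivWithinAt (fun y => f (-y)) (-f') (-s) x := by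
  simpa [Function.comp_def] using
    hf.comp x (hasDerivAt_neg x).hasDerivWithinAt fun y hy => Set.mem_neg.mp hy

lemma le_of_concaveOn_comp_of_apply_eq_sum {ι : Type*} {I : Set ℝ} {f φ ψ : ℝ → ℝ}
    (hf : StrictMonoOn f I) (hψ : LeftInvOn ψ φ I) (hS : Convex ℝ (φ '' I))
    (hconc : ConcaveOn ℝ (φ '' I) (f ∘ ψ)) {s : Finset ι} {w x : ι → ℝ}
    (hw₀ : ∀ i ∈ s, 0 ≤ w i) (hw₁ : ∑ i ∈ s, w i = 1) (hx : ∀ i ∈ s, x i ∈ I)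
    {M : ℝ} (hMI : M ∈ I) (hM : f M = ∑ i ∈ s, w i * f (x i)) :
    M ≤ ψ (∑ i ∈ s, w i * φ (x i)) := by
  have hφx : ∀ i ∈ s, φ (x i) ∈ φ '' I := fun i hi => mem_image_of_mem φ (hx i hi)
  have hjensen := hconc.le_map_sum hw₀ hw₁ hφx
  obtain ⟨t, htI, ht⟩ := hS.sum_mem hw₀ hw₁ hφx
  simp only [smul_eq_mul, Function.comp_apply] at hjensen ht
  rw [← ht, hψ htI] at hjensen ⊢
  have hfx : ∀ i ∈ s, f (ψ (φ (x i))) = f (x i) := fun i hi => by rw [hψ (hx i hi)]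
  rw [Finset.sum_congr rfl fun i hi => by rw [hfx i hi], ← hM] at hjensen
  exact (hf.le_iff_le hMI htI).mp hjensen

lemma logExpMean_neg_neg (p : ℝ) {k : ℕ} (x : Fin (k+1) → ℝ) :
    logExpMean (-p) (fun i => -x i) = -logExpMean p x := by
  simp only [logExpMean, neg_mul_neg]
  ring

section

variable {I : Set ℝ} {f f' f'' : ℝ → ℝ}

lemma concaveOn_comp_log_div (hd1 : ∀ t ∈ I, HasDerivWithinAt f (f' t) I t)
    (hd2 : ∀ t ∈ I, HasDerivWithinAt f' (f'' t) I t) {p : ℝ} (hp : p ≠ 0)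
    (hb : ∀ t ∈ I, f'' t ≤ p * f' t) (hS : Convex ℝ ((fun t => exp (p * t)) '' I)) :
    ConcaveOn ℝ ((fun t => exp (p * t)) '' I) (fun u => f (log u / p)) := by
  set S := (fun t => exp (p * t)) '' I
  have hL : MapsTo (fun u => log u / p) S I := by
    rintro _ ⟨t, ht, rfl⟩
    simpa [mul_div_cancel_left₀ _ hp] using ht
  have hSpos : ∀ u ∈ S, 0 < u := by rintro _ ⟨t, -, rfl⟩; exact exp_pos _
  have hdL : ∀ u ∈ S, HasDerivWithinAt (fun u => log u / p) (u⁻¹ / p) S u := fun u hu =>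
    ((hasDerivAt_log (hSpos u hu).ne').hasDerivWithinAt).div_const p
  have hdF : ∀ u ∈ S, HasDerivWithinAt (fun u => f (log u / p)) (f' (log u / p) * (u⁻¹ / p)) S u :=
    fun u hu => (hd1 _ (hL hu)).comp u (hdL u hu) hL
  have hdF' : ∀ u ∈ S, HasDerivWithinAt (fun u => f' (log u / p) * (u⁻¹ / p))
      (f'' (log u / p) * (u⁻¹ / p) * (u⁻¹ / p) + f' (log u / p) * (-(u ^ 2)⁻¹ / p)) S u :=
    fun u hu => ((hd2 _ (hL hu)).comp u (hdL u hu) hL).mul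
      ((hasDerivAt_inv (hSpos u hu).ne').hasDerivWithinAt.div_const p)
  refine concaveOn_of_hasDerivWithinAt2_nonpos hS (fun u hu => (hdF u hu).continuousWithinAt)
    (fun u hu => (hdF u (interior_subset hu)).mono interior_subset)
    (fun u hu => (hdF' u (interior_subset hu)).mono interior_subset) fun u hu => ?_
  have hu : u ∈ S := interior_subset hu
  have hu₀ := (hSpos u hu).ne'
  calc f'' (log u / p) * (u⁻¹ / p) * (u⁻¹ / p) + f' (log u / p) * (-(u ^ 2)⁻¹ / p)
      = (f'' (log u / p) - p * f' (log u / p)) / (p * u) ^ 2 := by field_simp; ring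
    _ ≤ 0 := div_nonpos_of_nonpos_of_nonneg (by linarith [hb _ (hL hu)]) (sq_nonneg _)

lemma le_logExpMean_of_deriv_pos (hI : Convex ℝ I)
    (hd1 : ∀ t ∈ I, HasDerivWithinAt f (f' t) I t)
    (hd2 : ∀ t ∈ I, HasDerivWithinAt f' (f'' t) I t) (hpos : ∀ t ∈ I, 0 < f' t)
    {p : ℝ} (hp : p ≠ 0) (hb : ∀ t ∈ I, f'' t ≤ p * f' t)
    {k : ℕ} {x : Fin (k+1) → ℝ} (hx : ∀ i, x i ∈ I)
    {M : ℝ} (hMI : M ∈ I) (hM : f M = (∑ i, f (x i)) / (k+1)) :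
    M ≤ logExpMean p x := by
  have hS : Convex ℝ ((fun t => exp (p * t)) '' I) :=
    (hI.isPreconnected.image _ (by fun_prop)).convex
  have hf : StrictMonoOn f I :=
    strictMonoOn_of_hasDerivWithinAt_pos hI (fun t ht => (hd1 t ht).continuousWithinAt)
      (fun t ht => (hd1 t (interior_subset ht)).mono interior_subset)
      (fun t ht => hpos t (interior_subset ht))
  have hψ : LeftInvOn (fun u => log u / p) (fun t => exp (p * t)) I := fun t _ => by
    simp [mul_div_cancel_left₀ _ hp]
  have hle := le_of_concaveOn_comp_of_apply_eq_sum hf hψ hS (concaveOn_comp_log_div hd1 hd2 hp hb hS)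
    (s := Finset.univ) (w := fun _ => 1 / (k + 1)) (fun _ _ => by positivity)
    (by simp only [Finset.sum_const, Finset.card_univ, Fintype.card_fin, nsmul_eq_mul]
        push_cast; field_simp) (fun i _ => hx i) hMI (by rw [hM, ← Finset.mul_sum]; ring)
  rwa [← Finset.mul_sum, one_div_mul_eq_div, div_eq_inv_mul, ← one_div] at hle

lemma logExpMean_le_of_deriv_pos (hI : Convex ℝ I)
    (hd1 : ∀ t ∈ I, HasDerivWithinAt f (f' t) I t)
    (hd2 : ∀ t ∈ I, HasDerivWithinAt f' (f'' t) I t) (hpos : ∀ t ∈ I, 0 < f' t)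
    {p : ℝ} (hp : p ≠ 0) (hb : ∀ t ∈ I, p * f' t ≤ f'' t)
    {k : ℕ} {x : Fin (k+1) → ℝ} (hx : ∀ i, x i ∈ I)
    {M : ℝ} (hMI : M ∈ I) (hM : f M = (∑ i, f (x i)) / (k+1)) :
    logExpMean p x ≤ M := by
  have h := le_logExpMean_of_deriv_pos (I := -I) (f := fun s => -f (-s))
    (f' := fun s => f' (-s)) (f'' := fun s => -f'' (-s)) hI.neg
    (fun t ht => (hd1 (-t) ht).comp_neg.neg.congr_deriv (neg_neg _))
    (fun t ht => (hd2 (-t) ht).comp_neg) (fun t ht => hpos (-t) ht) (neg_ne_zero.mpr hp)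
    (fun t ht => by linarith [hb (-t) ht]) (x := fun i => -x i) (by simpa using hx)
    (M := -M) (by simpa using hMI) (by simp [hM, neg_div])
  rw [logExpMean_neg_neg] at h
  linarith

lemma logExpMean_neg_le_and_le_logExpMean_of_deriv_pos (hI : Convex ℝ I)
    (hd1 : ∀ t ∈ I, HasDerivWithinAt f (f' t) I t)
    (hd2 : ∀ t ∈ I, HasDerivWithinAt f' (f'' t) I t) (hpos : ∀ t ∈ I, 0 < f' t)
    {K : ℝ} (hK : K ≠ 0) (hb : ∀ t ∈ I, |f'' t| ≤ K * f' t)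
    {k : ℕ} {x : Fin (k+1) → ℝ} (hx : ∀ i, x i ∈ I)
    {M : ℝ} (hMI : M ∈ I) (hM : f M = (∑ i, f (x i)) / (k+1)) :
    logExpMean (-K) x ≤ M ∧ M ≤ logExpMean K x :=
  ⟨logExpMean_le_of_deriv_pos hI hd1 hd2 hpos (neg_ne_zero.mpr hK)
      (fun t ht => by linarith [neg_abs_le (f'' t), hb t ht]) hx hMI hM,
    le_logExpMean_of_deriv_pos hI hd1 hd2 hpos hK
      (fun t ht => (le_abs_self _).trans (hb t ht)) hx hMI hM⟩

end

theorem stmt4_general (I : Set ℝ) (hI : Convex ℝ I) (f f' f'' : ℝ → ℝ)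
    (hd1 : ∀ t ∈ I, HasDerivWithinAt f (f' t) I t)
    (hd2 : ∀ t ∈ I, HasDerivWithinAt f' (f'' t) I t)
    (hne : ∀ t ∈ I, f' t ≠ 0)
    (K : ℝ) (hK : 0 < K)
    (hb : ∀ t ∈ I, |f'' t / f' t| ≤ K)
    (k : ℕ) (x : Fin (k+1) → ℝ) (hx : ∀ i, x i ∈ I)
    (M : ℝ) (hMI : M ∈ I) (hM : f M = (∑ i, f (x i)) / (k+1)) :
    logExpMean (-K) x ≤ M ∧ M ≤ logExpMean K x := by
  have hb' : ∀ t ∈ I, |f'' t| ≤ K * |f' t| := fun t ht => by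
    simpa [abs_div, div_le_iff₀ (abs_pos.mpr (hne t ht))] using hb t ht
  rcases hasDerivWithinAt_forall_lt_or_forall_gt_of_forall_ne hI hd1 hne with hneg | hpos
  · exact logExpMean_neg_le_and_le_logExpMean_of_deriv_pos hI (fun t ht => (hd1 t ht).neg)
      (fun t ht => (hd2 t ht).neg) (fun t ht => neg_pos.mpr (hneg t ht)) hK.ne'
      (fun t ht => by simpa [abs_of_neg (hneg t ht)] using hb' t ht) hx hMI
      (by simp [hM, neg_div])
  · exact logExpMean_neg_le_and_le_logExpMean_of_deriv_pos hI hd1 hd2 hpos hK.ne'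
      (fun t ht => by simpa [abs_of_pos (hpos t ht)] using hb' t ht) hx hMI hM

/-- if `f ∈ C²(I)`, `f' ≠ 0` on `I` and `|f''/f'| ≤ K`, then
    `E_{−K}(x) ≤ M_f(x) ≤ E_K(x)`, where `M` is the quasi-arithmetic mean of `x`,
    characterized by `M ∈ I` and `f M = (Σ f(xᵢ))/k`. -/
theorem stmt4 (I : Set ℝ) (hI : Convex ℝ I) (f f' f'' : ℝ → ℝ)
    (hd1 : ∀ t ∈ I, HasDerivWithinAt f (f' t) I t)
    (hd2 : ∀ t ∈ I, HasDerivWithinAt f' (f'' t) I t)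
    (hc : ContinuousOn f'' I)
    (hne : ∀ t ∈ I, f' t ≠ 0)
    (K : ℝ) (hK : 0 < K)
    (hb : ∀ t ∈ I, |f'' t / f' t| ≤ K)
    (k : ℕ) (x : Fin (k+1) → ℝ) (hx : ∀ i, x i ∈ I)
    (M : ℝ) (hMI : M ∈ I) (hM : f M = (∑ i, f (x i)) / (k+1)) :
    logExpMean (-K) x ≤ M ∧ M ≤ logExpMean K x :=
  stmt4_general I hI f f' f'' hd1 hd2 hne K hK hb k x hx M hMI hM
end

section
/- Let f, g ∈ C²(I) with f′·g′ ≠ 0 on an interval I. If f″/f′ ≥ g″/g′ everywhere on I, then M_f(x) ≥ M_g(x) for every k ∈ ℕ and every x ∈ I^k, where M_h denotes the quasi-arithmetic mean generated by h. -/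
/-!
Replacing `f` by `f' M • f` and `g` by `g' M • g` changes neither the means nor `f'' / f'`,
`g'' / g'`, and makes `f', g' > 0`. The hypothesis then says `(f' / g')' ≥ 0`, so with
`λ = f' N / g' N` the derivative `g' (f' / g' - λ)` of `f - λ g` changes sign from `-` to `+`
at `N`: the function `f - λ g` is minimal on `I` at `N = M_g(x)`. Averaging
`f (x i) - λ g (x i) ≥ f N - λ g N` gives `f M ≥ f N`, hence `M ≥ N` as `f` is increasing.
-/

open Set

lemma IsPreconnected.mul_pos_of_continuousOn_ne_zero {X : Type*} [TopologicalSpace X]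
    {S : Set X} (hS : IsPreconnected S) {p : X → ℝ} (hp : ContinuousOn p S)
    (hne : ∀ t ∈ S, p t ≠ 0) {a b : X} (ha : a ∈ S) (hb : b ∈ S) : 0 < p a * p b := by
  by_contra! h
  have hzero : ∀ {a b}, a ∈ S → b ∈ S → p a ≤ 0 → 0 ≤ p b → False := fun ha hb hpa hpb => by
    obtain ⟨t, ht, hpt⟩ := hS.intermediate_value ha hb hp ⟨hpa, hpb⟩
    exact hne t ht hpt
  rcases mul_nonpos_iff.1 h with ⟨hpa, hpb⟩ | ⟨hpa, hpb⟩
  · exact hzero hb ha hpb hpa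
  · exact hzero ha hb hpa hpb

lemma monotoneOn_of_forall_hasDerivWithinAt_nonneg {I : Set ℝ} (hI : Convex ℝ I)
    {h h' : ℝ → ℝ} (hd : ∀ t ∈ I, HasDerivWithinAt h (h' t) I t)
    (h'_nonneg : ∀ t ∈ I, 0 ≤ h' t) : MonotoneOn h I :=
  monotoneOn_of_hasDerivWithinAt_nonneg hI (fun t ht => (hd t ht).continuousWithinAt)
    (fun t ht => (hd t (interior_subset ht)).mono interior_subset)
    (fun t ht => h'_nonneg t (interior_subset ht))

lemma strictMonoOn_of_forall_hasDerivWithinAt_pos {I : Set ℝ} (hI : Convex ℝ I)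
    {h h' : ℝ → ℝ} (hd : ∀ t ∈ I, HasDerivWithinAt h (h' t) I t)
    (h'_pos : ∀ t ∈ I, 0 < h' t) : StrictMonoOn h I :=
  strictMonoOn_of_hasDerivWithinAt_pos hI (fun t ht => (hd t ht).continuousWithinAt)
    (fun t ht => (hd t (interior_subset ht)).mono interior_subset)
    (fun t ht => h'_pos t (interior_subset ht))

lemma isMinOn_of_forall_hasDerivWithinAt {I : Set ℝ} (hI : Convex ℝ I)
    {h h' : ℝ → ℝ} (hd : ∀ t ∈ I, HasDerivWithinAt h (h' t) I t) {N : ℝ} (hN : N ∈ I)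
    (h'_left : ∀ t ∈ I, t ≤ N → h' t ≤ 0) (h'_right : ∀ t ∈ I, N ≤ t → 0 ≤ h' t) :
    IsMinOn h I N := by
  intro t ht
  rcases le_total t N with htN | hNt
  · have hneg_mono := monotoneOn_of_forall_hasDerivWithinAt_nonneg (hI.inter (convex_Iic N))
      (fun s hs => ((hd s hs.1).neg).mono inter_subset_left)
      (fun s hs => neg_nonneg.2 (h'_left s hs.1 hs.2))
    exact neg_le_neg_iff.1 (hneg_mono ⟨ht, htN⟩ ⟨hN, self_mem_Iic⟩ htN)
  · exact monotoneOn_of_forall_hasDerivWithinAt_nonneg (hI.inter (convex_Ici N))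
      (fun s hs => (hd s hs.1).mono inter_subset_left)
      (fun s hs => h'_right s hs.1 hs.2) ⟨hN, self_mem_Ici⟩ ⟨ht, hNt⟩ hNt

lemma monotoneOn_div_of_logDeriv_le {I : Set ℝ} (hI : Convex ℝ I) {u u' v v' : ℝ → ℝ}
    (hu : ∀ t ∈ I, HasDerivWithinAt u (u' t) I t) (hv : ∀ t ∈ I, HasDerivWithinAt v (v' t) I t)
    (hu_pos : ∀ t ∈ I, 0 < u t) (hv_pos : ∀ t ∈ I, 0 < v t)
    (hle : ∀ t ∈ I, v' t / v t ≤ u' t / u t) :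
    MonotoneOn (fun t => u t / v t) I := by
  refine monotoneOn_of_forall_hasDerivWithinAt_nonneg hI
    (fun t ht => (hu t ht).div (hv t ht) (hv_pos t ht).ne') fun t ht => ?_
  have hu0 := hu_pos t ht
  have hv0 := hv_pos t ht
  have hnum : u' t * v t - u t * v' t = u t * v t * (u' t / u t - v' t / v t) := by
    field_simp
  have hlogDeriv : 0 ≤ u' t / u t - v' t / v t := sub_nonneg.2 (hle t ht)
  rw [hnum]
  positivity

lemma isMinOn_sub_mul_of_monotoneOn_div {I : Set ℝ} (hI : Convex ℝ I) {f f' g g' : ℝ → ℝ}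
    (hf : ∀ t ∈ I, HasDerivWithinAt f (f' t) I t) (hg : ∀ t ∈ I, HasDerivWithinAt g (g' t) I t)
    (hg_pos : ∀ t ∈ I, 0 < g' t) (hmono : MonotoneOn (fun t => f' t / g' t) I)
    {N : ℝ} (hN : N ∈ I) :
    IsMinOn (fun t => f t - f' N / g' N * g t) I N := by
  have hderiv : ∀ t ∈ I, f' t - f' N / g' N * g' t = g' t * (f' t / g' t - f' N / g' N) :=
    fun t ht => by field_simp [(hg_pos t ht).ne']
  refine isMinOn_of_forall_hasDerivWithinAt hI
    (fun t ht => (hf t ht).sub ((hg t ht).const_mul _)) hN (fun t ht htN => ?_) fun t ht hNt => ?_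
  · rw [hderiv t ht]
    exact mul_nonpos_of_nonneg_of_nonpos (hg_pos t ht).le (sub_nonpos.2 (hmono ht hN htN))
  · rw [hderiv t ht]
    exact mul_nonneg (hg_pos t ht).le (sub_nonneg.2 (hmono hN ht hNt))

lemma IsMinOn.le_sum_div_card {I : Set ℝ} {ι : Type*} [Fintype ι] [Nonempty ι] {h : ℝ → ℝ}
    {N : ℝ} (hmin : IsMinOn h I N) {x : ι → ℝ} (hx : ∀ i, x i ∈ I) :
    h N ≤ (∑ i, h (x i)) / Fintype.card ι := by
  rw [le_div_iff₀ (by exact_mod_cast Fintype.card_pos), mul_comm, ← nsmul_eq_mul,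
    ← Finset.card_univ, ← Finset.sum_const]
  exact Finset.sum_le_sum fun i _ => hmin (hx i)

/-- `M = M_h(x)`, characterised without inverting `h`. -/
def IsQuasiArithmeticMean (h : ℝ → ℝ) (I : Set ℝ) {ι : Type*} [Fintype ι] (x : ι → ℝ)
    (M : ℝ) : Prop :=
  M ∈ I ∧ h M = (∑ i, h (x i)) / Fintype.card ι

lemma IsQuasiArithmeticMean.const_mul {h : ℝ → ℝ} {I : Set ℝ} {ι : Type*} [Fintype ι]
    {x : ι → ℝ} {M : ℝ} (hM : IsQuasiArithmeticMean h I x M) (c : ℝ) :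
    IsQuasiArithmeticMean (fun t => c * h t) I x M :=
  ⟨hM.1, by simp only [hM.2, ← Finset.mul_sum, mul_div_assoc]⟩

lemma IsQuasiArithmeticMean.le_of_logDeriv_le {I : Set ℝ} (hI : Convex ℝ I)
    {f f' f'' g g' g'' : ℝ → ℝ}
    (hf : ∀ t ∈ I, HasDerivWithinAt f (f' t) I t) (hf' : ∀ t ∈ I, HasDerivWithinAt f' (f'' t) I t)
    (hg : ∀ t ∈ I, HasDerivWithinAt g (g' t) I t) (hg' : ∀ t ∈ I, HasDerivWithinAt g' (g'' t) I t)
    (hf'_pos : ∀ t ∈ I, 0 < f' t) (hg'_pos : ∀ t ∈ I, 0 < g' t)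
    (hle : ∀ t ∈ I, g'' t / g' t ≤ f'' t / f' t)
    {ι : Type*} [Fintype ι] [Nonempty ι] {x : ι → ℝ} (hx : ∀ i, x i ∈ I) {M N : ℝ}
    (hM : IsQuasiArithmeticMean f I x M) (hN : IsQuasiArithmeticMean g I x N) :
    N ≤ M := by
  have hmin := isMinOn_sub_mul_of_monotoneOn_div hI hf hg hg'_pos
    (monotoneOn_div_of_logDeriv_le hI hf' hg' hf'_pos hg'_pos hle) hN.1
  have hmean := hmin.le_sum_div_card hx
  rw [Finset.sum_sub_distrib, ← Finset.mul_sum, sub_div, mul_div_assoc, ← hM.2, ← hN.2] at hmean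
  have hfNM : f N ≤ f M := by linarith
  exact ((strictMonoOn_of_forall_hasDerivWithinAt_pos hI hf hf'_pos).le_iff_le hN.1 hM.1).1 hfNM

theorem stmt5_general (I : Set ℝ) (hI : Convex ℝ I) (f f' f'' g g' g'' : ℝ → ℝ)
    (hdf1 : ∀ t ∈ I, HasDerivWithinAt f (f' t) I t)
    (hdf2 : ∀ t ∈ I, HasDerivWithinAt f' (f'' t) I t)
    (hdg1 : ∀ t ∈ I, HasDerivWithinAt g (g' t) I t)
    (hdg2 : ∀ t ∈ I, HasDerivWithinAt g' (g'' t) I t)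
    (hne : ∀ t ∈ I, f' t ≠ 0 ∧ g' t ≠ 0)
    (hcmp : ∀ t ∈ I, g'' t / g' t ≤ f'' t / f' t)
    (k : ℕ) (x : Fin (k+1) → ℝ) (hx : ∀ i, x i ∈ I)
    (M N : ℝ) (hMI : M ∈ I) (hNI : N ∈ I)
    (hM : f M = (∑ i, f (x i)) / (k+1))
    (hN : g N = (∑ i, g (x i)) / (k+1)) :
    N ≤ M := by
  have hf'_pos : ∀ t ∈ I, 0 < f' M * f' t := fun t ht =>
    hI.isPreconnected.mul_pos_of_continuousOn_ne_zero
      (fun s hs => (hdf2 s hs).continuousWithinAt) (fun s hs => (hne s hs).1) hMI ht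
  have hg'_pos : ∀ t ∈ I, 0 < g' M * g' t := fun t ht =>
    hI.isPreconnected.mul_pos_of_continuousOn_ne_zero
      (fun s hs => (hdg2 s hs).continuousWithinAt) (fun s hs => (hne s hs).2) hMI ht
  have hMf : IsQuasiArithmeticMean f I x M := ⟨hMI, by simpa using hM⟩
  have hNg : IsQuasiArithmeticMean g I x N := ⟨hNI, by simpa using hN⟩
  refine IsQuasiArithmeticMean.le_of_logDeriv_le hI
    (fun t ht => (hdf1 t ht).const_mul _) (fun t ht => (hdf2 t ht).const_mul _)
    (fun t ht => (hdg1 t ht).const_mul _) (fun t ht => (hdg2 t ht).const_mul _)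
    hf'_pos hg'_pos (fun t ht => ?_) hx (hMf.const_mul (f' M)) (hNg.const_mul (g' M))
  rw [mul_div_mul_left _ _ (hne M hMI).1, mul_div_mul_left _ _ (hne M hMI).2]
  exact hcmp t ht

/-- one direction of the Mikusiński–Łojasiewicz comparison theorem:
    if `f, g ∈ C²(I)` with nonvanishing first derivatives and `f''/f' ≥ g''/g'`
    everywhere on `I`, then `M_f(x) ≥ M_g(x)`; the quasi-arithmetic means `M, N`
    are characterized by `M, N ∈ I`, `f M = (Σ f(xᵢ))/k` and `g N = (Σ g(xᵢ))/k`. -/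
theorem stmt5 (I : Set ℝ) (hI : Convex ℝ I) (f f' f'' g g' g'' : ℝ → ℝ)
    (hdf1 : ∀ t ∈ I, HasDerivWithinAt f (f' t) I t)
    (hdf2 : ∀ t ∈ I, HasDerivWithinAt f' (f'' t) I t)
    (hcf : ContinuousOn f'' I)
    (hdg1 : ∀ t ∈ I, HasDerivWithinAt g (g' t) I t)
    (hdg2 : ∀ t ∈ I, HasDerivWithinAt g' (g'' t) I t)
    (hcg : ContinuousOn g'' I)
    (hne : ∀ t ∈ I, f' t ≠ 0 ∧ g' t ≠ 0)
    (hcmp : ∀ t ∈ I, g'' t / g' t ≤ f'' t / f' t)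
    (k : ℕ) (x : Fin (k+1) → ℝ) (hx : ∀ i, x i ∈ I)
    (M N : ℝ) (hMI : M ∈ I) (hNI : N ∈ I)
    (hM : f M = (∑ i, f (x i)) / (k+1))
    (hN : g N = (∑ i, g (x i)) / (k+1)) :
    N ≤ M :=
  stmt5_general I hI f f' f'' g g' g'' hdf1 hdf2 hdg1 hdg2 hne hcmp k x hx M N hMI hNI hM hN
end

section
/- Let I be an interval, f ∈ C²(I) with f′ ≠ 0 and f″ of locally bounded variation, and x ∈ I^k with arithmetic mean x̄. Then M_f(x) = x̄ + (1/2)·Var(x)·(f″(x̄)/f′(x̄)) + (1/(2f′(x̄)))·A[∫_{x̄}^{x_i}(x_i − t)² df″(t)] + ∫_{x̄}^{M_f(x)} ((f(u) − f(M_f(x)))·f″(u)/f′(u)²) du, where A denotes the average over the k entries. -/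
/-! Two applications of the fundamental theorem of calculus. Taylor's formula with integral
remainder gives `∫_{x̄}^{xᵢ} 2 (xᵢ - t) f''(t) dt = 2 (f(xᵢ) - f(x̄) - f'(x̄)(xᵢ - x̄))`, and
averaging over `i` turns the right-hand sides into `2 (f(M) - f(x̄))`, since the linear terms
average to zero. On the other hand `u ↦ u - (f(u) - f(M)) / f'(u)` is an antiderivative of
`(f(u) - f(M)) f''(u) / f'(u)²`, so the last integral equals `M - x̄ + (f(x̄) - f(M)) / f'(x̄)`.
Substituting both identities, the claimed formula collapses to an identity of rational
expressions. -/

open Set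

namespace Convex

variable {I : Set ℝ} (hI : Convex ℝ I)
include hI

theorem integral_eq_sub_of_hasDerivWithinAt {F F' : ℝ → ℝ}
    (hF : ∀ t ∈ I, HasDerivWithinAt F (F' t) I t) (hF' : ContinuousOn F' I)
    {a b : ℝ} (ha : a ∈ I) (hb : b ∈ I) :
    ∫ t in a..b, F' t = F b - F a := by
  have hsub : uIcc a b ⊆ I := hI.ordConnected.uIcc_subset ha hb
  have hIoo : Ioo (min a b) (max a b) ⊆ I := Ioo_subset_Icc_self.trans hsub
  apply intervalIntegral.integral_eq_sub_of_hasDeriv_right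
  · exact fun t ht => (hF t (hsub ht)).continuousWithinAt.mono hsub
  · exact fun t ht => ((hF t (hIoo ht)).hasDerivAt
      (mem_nhds_iff.mpr ⟨_, hIoo, isOpen_Ioo, ht⟩)).hasDerivWithinAt
  · exact (hF'.mono hsub).intervalIntegrable

variable {f f' f'' : ℝ → ℝ}
    (hf : ∀ t ∈ I, HasDerivWithinAt f (f' t) I t)
    (hf' : ∀ t ∈ I, HasDerivWithinAt f' (f'' t) I t)
    (hf'' : ContinuousOn f'' I)
include hf hf' hf''

theorem integral_sub_mul_eq_taylor_remainder {a b : ℝ} (ha : a ∈ I) (hb : b ∈ I) :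
    ∫ t in a..b, (b - t) * f'' t = f b - f a - f' a * (b - a) := by
  have hderiv : ∀ t ∈ I,
      HasDerivWithinAt (fun t => f t + f' t * (b - t)) ((b - t) * f'' t) I t := fun t ht =>
    ((hf t ht).add ((hf' t ht).mul ((hasDerivWithinAt_id t I).const_sub b))).congr_deriv
      (by simp only [id_eq]; ring)
  rw [hI.integral_eq_sub_of_hasDerivWithinAt hderiv
    ((continuousOn_const.sub continuousOn_id).mul hf'') ha hb]
  ring

theorem integral_sub_const_mul_div_sq (hne : ∀ t ∈ I, f' t ≠ 0) {c a b : ℝ}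
    (ha : a ∈ I) (hb : b ∈ I) :
    ∫ u in a..b, (f u - c) * f'' u / f' u ^ 2
      = b - (f b - c) / f' b - (a - (f a - c) / f' a) := by
  have hfc : ContinuousOn f I := fun t ht => (hf t ht).continuousWithinAt
  have hf'c : ContinuousOn f' I := fun t ht => (hf' t ht).continuousWithinAt
  refine hI.integral_eq_sub_of_hasDerivWithinAt (F := fun u => u - (f u - c) / f' u)
    (F' := fun u => (f u - c) * f'' u / f' u ^ 2) (fun t ht => ?_)
    (((hfc.sub continuousOn_const).mul hf'').div (hf'c.pow 2)
      fun t ht => pow_ne_zero 2 (hne t ht)) ha hb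
  refine ((hasDerivWithinAt_id t I).sub
    (((hf t ht).sub_const c).div (hf' t ht) (hne t ht))).congr_deriv ?_
  field_simp [hne t ht]
  ring

end Convex

theorem stmt8_general (I : Set ℝ) (hI : Convex ℝ I) (f f' f'' : ℝ → ℝ)
    (hd1 : ∀ t ∈ I, HasDerivWithinAt f (f' t) I t)
    (hd2 : ∀ t ∈ I, HasDerivWithinAt f' (f'' t) I t)
    (hc : ContinuousOn f'' I)
    (hne : ∀ t ∈ I, f' t ≠ 0)
    (k : ℕ) (x : Fin (k+1) → ℝ) (hx : ∀ i, x i ∈ I)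
    (xbar : ℝ) (hxbar : xbar = (∑ i, x i) / (k+1)) (hxbarI : xbar ∈ I)
    (M : ℝ) (hMI : M ∈ I) (hM : f M = (∑ i, f (x i)) / (k+1)) :
    M = xbar + (1/2) * ((∑ i, (x i - xbar)^2) / (k+1)) * (f'' xbar / f' xbar)
      + (1/(2 * f' xbar)) *
        ((∑ i, (-((x i - xbar)^2 * f'' xbar)
            + ∫ t in xbar..(x i), 2 * (x i - t) * f'' t)) / (k+1))
      + ∫ u in xbar..M, (f u - f M) * f'' u / (f' u)^2 := by
  have taylor : ∀ i, ∫ t in xbar..(x i), 2 * (x i - t) * f'' t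
      = 2 * (f (x i) - f xbar - f' xbar * (x i - xbar)) := fun i => by
    simp_rw [mul_assoc, intervalIntegral.integral_const_mul,
      hI.integral_sub_mul_eq_taylor_remainder hd1 hd2 hc hxbarI (hx i)]
  have hn : (k : ℝ) + 1 ≠ 0 := by positivity
  have hsum_x : ∑ i, x i = ((k : ℝ) + 1) * xbar := by rw [hxbar]; field_simp
  have hsum_f : ∑ i, f (x i) = ((k : ℝ) + 1) * f M := by rw [hM]; field_simp
  have hsum : ∑ i, (-((x i - xbar)^2 * f'' xbar) + ∫ t in xbar..(x i), 2 * (x i - t) * f'' t)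
      = -((∑ i, (x i - xbar)^2) * f'' xbar) + 2 * (((k : ℝ) + 1) * (f M - f xbar)) := by
    simp only [taylor, Finset.sum_add_distrib, Finset.sum_neg_distrib, ← Finset.sum_mul,
      ← Finset.mul_sum, Finset.sum_sub_distrib, Finset.sum_const, Finset.card_fin,
      nsmul_eq_mul, hsum_x, hsum_f]
    push_cast
    ring
  rw [hsum, hI.integral_sub_const_mul_div_sq hd1 hd2 hc hne hxbarI hMI]
  field_simp [hne xbar hxbarI]
  ring

/-- Lemma: integral form of the quasi-arithmetic mean.
    `f ∈ C²(I)` with `f' ≠ 0` and `f''` of locally bounded variation; `x ∈ I^k`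
    with arithmetic mean `x̄`; `M` is the quasi-arithmetic mean, characterized by
    `M ∈ I`, `f M = (Σ f(xᵢ))/k`.  The Riemann–Stieltjes integral
    `∫_{x̄}^{xᵢ} (xᵢ − t)² df''(t)` is expressed, via integration by parts (an exact
    identity for integrators of bounded variation against a C¹ integrand), as
    `−(xᵢ − x̄)²·f''(x̄) + ∫_{x̄}^{xᵢ} 2(xᵢ − t) f''(t) dt`. -/
theorem stmt8 (I : Set ℝ) (hI : Convex ℝ I) (f f' f'' : ℝ → ℝ)
    (hd1 : ∀ t ∈ I, HasDerivWithinAt f (f' t) I t)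
    (hd2 : ∀ t ∈ I, HasDerivWithinAt f' (f'' t) I t)
    (hc : ContinuousOn f'' I)
    (hne : ∀ t ∈ I, f' t ≠ 0)
    (hbv : LocallyBoundedVariationOn f'' I)
    (k : ℕ) (x : Fin (k+1) → ℝ) (hx : ∀ i, x i ∈ I)
    (xbar : ℝ) (hxbar : xbar = (∑ i, x i) / (k+1)) (hxbarI : xbar ∈ I)
    (M : ℝ) (hMI : M ∈ I) (hM : f M = (∑ i, f (x i)) / (k+1)) :
    M = xbar + (1/2) * ((∑ i, (x i - xbar)^2) / (k+1)) * (f'' xbar / f' xbar)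
      + (1/(2 * f' xbar)) *
        ((∑ i, (-((x i - xbar)^2 * f'' xbar)
            + ∫ t in xbar..(x i), 2 * (x i - t) * f'' t)) / (k+1))
      + ∫ u in xbar..M, (f u - f M) * f'' u / (f' u)^2 :=
  stmt8_general I hI f f' f'' hd1 hd2 hc hne k x hx xbar hxbar hxbarI M hMI hM
end

section
/- Let I be an interval, f ∈ C²(I) with f′ ≠ 0, |f″/f′| ≤ K on I, and x ∈ I^k. Then |∫_{x̄}^{M_f(x)} ((f(u) − f(M_f(x)))·f″(u)/f′(u)²) du| ≤ K·(M_f(x) − x̄)²·exp(‖f″/f′‖_*), where ‖f″/f′‖_* := sup_{a,b ∈ I} |∫_a^b (f″/f′)(t) dt| and x̄ is the arithmetic mean of x. -/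
/-!
On `I` the derivative of `log |f'|` is `f''/f'`, so the star-norm bound `L` gives
`|f' t| ≤ |f' u| e^L` for all `t, u ∈ I`. Integrating `f'` from `M` to `u` then yields
`|f u - f M| ≤ |f' u| e^L |u - M|`, hence the integrand
`((f u - f M) / f' u) · (f'' u / f' u)` is at most `e^L |M - x̄| · K` on `[x̄, M]`,
and the integral over an interval of length `|M - x̄|` is at most `K (M - x̄)² e^L`.
-/

open Set intervalIntegral

theorem integral_eq_sub_of_hasDerivWithinAt_of_convex {E : Type*} [NormedAddCommGroup E]
    [NormedSpace ℝ E] [CompleteSpace E] {I : Set ℝ} (hI : Convex ℝ I) {g g' : ℝ → E}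
    (hd : ∀ t ∈ I, HasDerivWithinAt g (g' t) I t) (hcg : ContinuousOn g' I)
    {a b : ℝ} (ha : a ∈ I) (hb : b ∈ I) :
    ∫ t in a..b, g' t = g b - g a := by
  have hsub : uIcc a b ⊆ I := hI.ordConnected.uIcc_subset ha hb
  apply integral_eq_sub_of_hasDeriv_right
  · exact fun t ht => (hd t (hsub ht)).continuousWithinAt.mono hsub
  · intro t ht
    have hIoo : Ioo (min a b) (max a b) ⊆ I := Ioo_subset_Icc_self.trans hsub
    exact (((hd t (hIoo ht)).mono hIoo).hasDerivAt (Ioo_mem_nhds ht.1 ht.2)).hasDerivWithinAt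
  · exact (hcg.mono hsub).intervalIntegrable

section StarNorm

variable {I : Set ℝ} {f f' f'' : ℝ → ℝ} {L : ℝ}

theorem abs_deriv_le_mul_exp (hI : Convex ℝ I)
    (hd2 : ∀ t ∈ I, HasDerivWithinAt f' (f'' t) I t) (hc : ContinuousOn f'' I)
    (hne : ∀ t ∈ I, f' t ≠ 0) (hbL : ∀ a ∈ I, ∀ b ∈ I, |∫ t in a..b, f'' t / f' t| ≤ L)
    {a b : ℝ} (ha : a ∈ I) (hb : b ∈ I) :
    |f' b| ≤ |f' a| * Real.exp L := by
  have hlog : ∀ t ∈ I, HasDerivWithinAt (fun t => Real.log (f' t)) (f'' t / f' t) I t :=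
    fun t ht => (hd2 t ht).log (hne t ht)
  have hcq : ContinuousOn (fun t => f'' t / f' t) I :=
    hc.div (fun t ht => (hd2 t ht).continuousWithinAt) hne
  have hdiff : Real.log (f' b) - Real.log (f' a) ≤ L := by
    rw [← integral_eq_sub_of_hasDerivWithinAt_of_convex hI hlog hcq ha hb]
    exact (le_abs_self _).trans (hbL a ha b hb)
  calc |f' b| = Real.exp (Real.log (f' b)) := (Real.exp_log_eq_abs (hne b hb)).symm
    _ ≤ Real.exp (Real.log (f' a) + L) := Real.exp_le_exp.mpr (by linarith)
    _ = |f' a| * Real.exp L := by rw [Real.exp_add, Real.exp_log_eq_abs (hne a ha)]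

theorem abs_sub_le_abs_deriv_mul_exp (hI : Convex ℝ I)
    (hd1 : ∀ t ∈ I, HasDerivWithinAt f (f' t) I t)
    (hd2 : ∀ t ∈ I, HasDerivWithinAt f' (f'' t) I t) (hc : ContinuousOn f'' I)
    (hne : ∀ t ∈ I, f' t ≠ 0) (hbL : ∀ a ∈ I, ∀ b ∈ I, |∫ t in a..b, f'' t / f' t| ≤ L)
    {u v : ℝ} (hu : u ∈ I) (hv : v ∈ I) :
    |f u - f v| ≤ |f' u| * Real.exp L * |u - v| := by
  have hcf' : ContinuousOn f' I := fun t ht => (hd2 t ht).continuousWithinAt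
  rw [← integral_eq_sub_of_hasDerivWithinAt_of_convex (g := f) hI hd1 hcf' hv hu]
  refine norm_integral_le_of_norm_le_const (f := f') fun t ht => ?_
  exact abs_deriv_le_mul_exp hI hd2 hc hne hbL hu
    (hI.ordConnected.uIcc_subset hv hu (uIoc_subset_uIcc ht))

theorem abs_sub_mul_div_deriv_sq_le (hI : Convex ℝ I)
    (hd1 : ∀ t ∈ I, HasDerivWithinAt f (f' t) I t)
    (hd2 : ∀ t ∈ I, HasDerivWithinAt f' (f'' t) I t) (hc : ContinuousOn f'' I)
    (hne : ∀ t ∈ I, f' t ≠ 0) {K : ℝ} (hbK : ∀ t ∈ I, |f'' t / f' t| ≤ K)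
    (hbL : ∀ a ∈ I, ∀ b ∈ I, |∫ t in a..b, f'' t / f' t| ≤ L)
    {a b u : ℝ} (ha : a ∈ I) (hb : b ∈ I) (hu : u ∈ uIcc a b) :
    |(f u - f b) * f'' u / f' u ^ 2| ≤ K * |b - a| * Real.exp L := by
  have huI : u ∈ I := hI.ordConnected.uIcc_subset ha hb hu
  have hf'u : 0 < |f' u| := abs_pos.mpr (hne u huI)
  have hdist : |u - b| ≤ |b - a| := by
    rw [abs_sub_comm u b]; exact abs_sub_right_of_mem_uIcc hu
  have hquot : |f u - f b| / |f' u| ≤ Real.exp L * |b - a| := by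
    rw [div_le_iff₀ hf'u]
    calc |f u - f b| ≤ |f' u| * Real.exp L * |u - b| :=
          abs_sub_le_abs_deriv_mul_exp hI hd1 hd2 hc hne hbL huI hb
      _ ≤ |f' u| * Real.exp L * |b - a| := by gcongr
      _ = Real.exp L * |b - a| * |f' u| := by ring
  have hsplit : (f u - f b) * f'' u / f' u ^ 2 = (f u - f b) / f' u * (f'' u / f' u) := by
    field_simp
  calc |(f u - f b) * f'' u / f' u ^ 2| = |f u - f b| / |f' u| * |f'' u / f' u| := by
        rw [hsplit, abs_mul, abs_div]
    _ ≤ Real.exp L * |b - a| * K := mul_le_mul hquot (hbK u huI) (abs_nonneg _) (by positivity)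
    _ = K * |b - a| * Real.exp L := by ring

end StarNorm

theorem stmt9_general (I : Set ℝ) (hI : Convex ℝ I) (f f' f'' : ℝ → ℝ)
    (hd1 : ∀ t ∈ I, HasDerivWithinAt f (f' t) I t)
    (hd2 : ∀ t ∈ I, HasDerivWithinAt f' (f'' t) I t)
    (hc : ContinuousOn f'' I)
    (hne : ∀ t ∈ I, f' t ≠ 0)
    (K L : ℝ)
    (hbK : ∀ t ∈ I, |f'' t / f' t| ≤ K)
    (hbL : ∀ a ∈ I, ∀ b ∈ I, |∫ t in a..b, f'' t / f' t| ≤ L)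
    (xbar : ℝ) (hxbarI : xbar ∈ I)
    (M : ℝ) (hMI : M ∈ I) :
    |∫ u in xbar..M, (f u - f M) * f'' u / (f' u)^2|
      ≤ K * (M - xbar)^2 * Real.exp L := by
  calc |∫ u in xbar..M, (f u - f M) * f'' u / (f' u)^2|
      ≤ K * |M - xbar| * Real.exp L * |M - xbar| :=
        norm_integral_le_of_norm_le_const (f := fun u => (f u - f M) * f'' u / (f' u)^2)
          fun u hu => abs_sub_mul_div_deriv_sq_le hI hd1 hd2 hc hne hbK hbL hxbarI hMI (uIoc_subset_uIcc hu)
    _ = K * (M - xbar)^2 * Real.exp L := by rw [← sq_abs (M - xbar)]; ring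

/-- bound on the right-most term in the integral form of the
    quasi-arithmetic mean.  `L` is an upper bound for the star norm
    `‖f''/f'‖_* = sup_{a,b ∈ I} |∫_a^b f''/f'|`; `M` is the quasi-arithmetic mean,
    characterized by `M ∈ I`, `f M = (Σ f(xᵢ))/k`, and `x̄` the arithmetic mean. -/
theorem stmt9 (I : Set ℝ) (hI : Convex ℝ I) (f f' f'' : ℝ → ℝ)
    (hd1 : ∀ t ∈ I, HasDerivWithinAt f (f' t) I t)
    (hd2 : ∀ t ∈ I, HasDerivWithinAt f' (f'' t) I t)
    (hc : ContinuousOn f'' I)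
    (hne : ∀ t ∈ I, f' t ≠ 0)
    (K L : ℝ) (hK : 0 < K)
    (hbK : ∀ t ∈ I, |f'' t / f' t| ≤ K)
    (hbL : ∀ a ∈ I, ∀ b ∈ I, |∫ t in a..b, f'' t / f' t| ≤ L)
    (k : ℕ) (x : Fin (k+1) → ℝ) (hx : ∀ i, x i ∈ I)
    (xbar : ℝ) (hxbar : xbar = (∑ i, x i) / (k+1)) (hxbarI : xbar ∈ I)
    (M : ℝ) (hMI : M ∈ I) (hM : f M = (∑ i, f (x i)) / (k+1)) :
    |∫ u in xbar..M, (f u - f M) * f'' u / (f' u)^2|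
      ≤ K * (M - xbar)^2 * Real.exp L :=
  stmt9_general I hI f f' f'' hd1 hd2 hc hne K L hbK hbL xbar hxbarI M hMI
end

section
/- Let I be an interval, K > 0, f ∈ C²(I) with f′ ≠ 0, f″ of locally bounded variation, and |f″/f′| ≤ K on I. If x ∈ I^k satisfies max x − min x < min(1/K, 1), then |M_f(x) − x̄| ≤ ((3 + 7e)/6)·K·(max x − min x)², where x̄ is the arithmetic mean of x. -/
/-!
On `[min x, max x]` the bound `|f''/f'| ≤ K` makes `log |f'|` `K`-Lipschitz, so, as the interval has
length at most `1/K`, `|f'|` varies there by a factor at most `e`. Both `M` and `x̄` lie in that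
interval, so the mean value theorem gives `|f M - f x̄| = |f' ξ| |M - x̄|`. On the other hand the
first-order Taylor terms `f' x̄ (xᵢ - x̄)` average to zero, so `|f M - f x̄|` is at most the largest
Taylor remainder, i.e. at most `K e |f' ξ| (max x - min x)²`. Dividing by `|f' ξ|` gives the bound
with the constant `e ≤ (3 + 7e)/6`.
-/

open Set Real

section Means

variable {ι : Type*} [Fintype ι] [Nonempty ι]

theorem Convex.sum_div_card_mem {s : Set ℝ} (hs : Convex ℝ s) {x : ι → ℝ} (hx : ∀ i, x i ∈ s) :
    (∑ i, x i) / Fintype.card ι ∈ s := by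
  have hcard : (Fintype.card ι : ℝ) ≠ 0 := Nat.cast_ne_zero.2 Fintype.card_ne_zero
  have := hs.sum_mem (t := Finset.univ) (w := fun _ => (Fintype.card ι : ℝ)⁻¹)
    (fun _ _ => by positivity) (by simp [hcard]) (fun i _ => hx i)
  simpa [Finset.mul_sum, div_eq_inv_mul] using this

/-- A quasi-arithmetic mean lies in every convex set containing the data. -/
theorem Convex.mem_of_apply_eq_sum_div_card {s t : Set ℝ} (hs : Convex ℝ s) (hst : s ⊆ t)
    {f : ℝ → ℝ} (hf : ContinuousOn f s) (hinj : InjOn f t) {x : ι → ℝ} (hx : ∀ i, x i ∈ s)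
    {M : ℝ} (hM : M ∈ t) (hfM : f M = (∑ i, f (x i)) / Fintype.card ι) : M ∈ s := by
  have himage : Convex ℝ (f '' s) :=
    (isPreconnected_iff_ordConnected.1 (hs.isPreconnected.image f hf)).convex
  obtain ⟨M', hM's, hfM'⟩ := hfM ▸ himage.sum_div_card_mem fun i => mem_image_of_mem f (hx i)
  exact hinj (hst hM's) hM hfM' ▸ hM's

theorem abs_sum_div_card_sub_le {f : ℝ → ℝ} {x : ι → ℝ} {xbar c C : ℝ}
    (hxbar : xbar = (∑ i, x i) / Fintype.card ι)
    (h : ∀ i, |f (x i) - f xbar - c * (x i - xbar)| ≤ C) :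
    |(∑ i, f (x i)) / Fintype.card ι - f xbar| ≤ C := by
  have hcard : (Fintype.card ι : ℝ) ≠ 0 := Nat.cast_ne_zero.2 Fintype.card_ne_zero
  have hmean := (convex_Icc (-C) C).sum_div_card_mem fun i => abs_le.1 (h i)
  -- the linear terms `c * (x i - xbar)` average to zero
  have hlin : (∑ i, (f (x i) - f xbar - c * (x i - xbar))) / Fintype.card ι
      = (∑ i, f (x i)) / Fintype.card ι - f xbar := by
    simp only [Finset.sum_sub_distrib, ← Finset.mul_sum, Finset.sum_const, Finset.card_univ,
      nsmul_eq_mul, hxbar]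
    field_simp
    ring
  exact abs_le.2 (hlin ▸ hmean)

end Means

section Calculus

variable {s : Set ℝ} {f f' f'' : ℝ → ℝ}

theorem Convex.injOn_of_hasDerivWithinAt_ne_zero (hs : Convex ℝ s)
    (hf : ∀ t ∈ s, HasDerivWithinAt f (f' t) s t) (hf' : ∀ t ∈ s, f' t ≠ 0) : InjOn f s := by
  have hcont : ContinuousOn f s := fun t ht => (hf t ht).continuousWithinAt
  have hint : ∀ t ∈ interior s, HasDerivWithinAt f (f' t) (interior s) t :=
    fun t ht => (hf t (interior_subset ht)).mono interior_subset
  rcases hasDerivWithinAt_forall_lt_or_forall_gt_of_forall_ne hs hf hf' with hneg | hpos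
  · exact (strictAntiOn_of_hasDerivWithinAt_neg hs hcont hint
      fun t ht => hneg t (interior_subset ht)).injOn
  · exact (strictMonoOn_of_hasDerivWithinAt_pos hs hcont hint
      fun t ht => hpos t (interior_subset ht)).injOn

theorem Convex.exists_mem_uIcc_sub_eq_mul_sub (hs : Convex ℝ s)
    (hf : ∀ t ∈ s, HasDerivWithinAt f (f' t) s t) {x y : ℝ} (hx : x ∈ s) (hy : y ∈ s) :
    ∃ ξ ∈ uIcc x y, f y - f x = f' ξ * (y - x) := by
  wlog hxy : x < y generalizing x y
  · rcases (not_lt.1 hxy).lt_or_eq with hyx | rfl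
    · obtain ⟨ξ, hξ, h⟩ := this hy hx hyx
      exact ⟨ξ, uIcc_comm x y ▸ hξ, by linear_combination -h⟩
    · exact ⟨y, left_mem_uIcc, by ring⟩
  have hIcc : Icc x y ⊆ s := hs.ordConnected.out hx hy
  have hIoo : Ioo x y ⊆ interior s := interior_maximal (Ioo_subset_Icc_self.trans hIcc) isOpen_Ioo
  obtain ⟨ξ, hξ, h⟩ := exists_hasDerivAt_eq_slope f f' hxy
    (fun t ht => (hf t (hIcc ht)).continuousWithinAt.mono hIcc)
    (fun t ht => (hf t (interior_subset (hIoo ht))).hasDerivAt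
      (mem_interior_iff_mem_nhds.1 (hIoo ht)))
  refine ⟨ξ, Icc_subset_uIcc (Ioo_subset_Icc_self hξ), ?_⟩
  rw [h, div_mul_cancel₀ _ (sub_ne_zero.2 hxy.ne')]

/-- Integrated form of `|f''/f'| ≤ K`: `log |f'|` is `K`-Lipschitz. -/
theorem Convex.abs_le_exp_mul_abs_of_abs_div_le (hs : Convex ℝ s)
    (hf' : ∀ t ∈ s, HasDerivWithinAt f' (f'' t) s t) (hne : ∀ t ∈ s, f' t ≠ 0) {K : ℝ}
    (hK : ∀ t ∈ s, |f'' t / f' t| ≤ K) {t u : ℝ} (ht : t ∈ s) (hu : u ∈ s) :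
    |f' t| ≤ exp (K * |t - u|) * |f' u| := by
  have hlog := hs.norm_image_sub_le_of_norm_hasDerivWithin_le
    (fun v hv => (hf' v hv).log (hne v hv)) hK hu ht
  rw [Real.norm_eq_abs, Real.norm_eq_abs] at hlog
  calc |f' t| = exp (log (f' t)) := by rw [← log_abs, exp_log (abs_pos.2 (hne t ht))]
    _ ≤ exp (K * |t - u| + log (f' u)) := exp_le_exp.2 (by linarith [(abs_le.1 hlog).2])
    _ = exp (K * |t - u|) * |f' u| := by
      rw [exp_add, ← log_abs, exp_log (abs_pos.2 (hne u hu))]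

theorem Convex.abs_sub_sub_mul_sub_le (hs : Convex ℝ s)
    (hf : ∀ t ∈ s, HasDerivWithinAt f (f' t) s t) (hf' : ∀ t ∈ s, HasDerivWithinAt f' (f'' t) s t)
    {B : ℝ} (hB : ∀ t ∈ s, |f'' t| ≤ B) {x y : ℝ} (hx : x ∈ s) (hy : y ∈ s) :
    |f y - f x - f' x * (y - x)| ≤ B * (y - x) ^ 2 := by
  have hJ : uIcc x y ⊆ s := hs.ordConnected.uIcc_subset hx hy
  have hB0 : 0 ≤ B := (abs_nonneg _).trans (hB x hx)
  have hslope : ∀ t ∈ uIcc x y, ‖f' t - f' x‖ ≤ B * |y - x| := fun t ht =>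
    (convex_uIcc x y).norm_image_sub_le_of_norm_hasDerivWithin_le
      (fun v hv => (hf' v (hJ hv)).mono hJ) (fun v hv => hB v (hJ hv)) left_mem_uIcc ht
    |>.trans (mul_le_mul_of_nonneg_left (abs_sub_left_of_mem_uIcc ht) hB0)
  have hrem := (convex_uIcc x y).norm_image_sub_le_of_norm_hasDerivWithin_le
    (f := fun t => f t - f' x * t)
    (fun v hv => ((hf v (hJ hv)).mono hJ).sub ((hasDerivWithinAt_id v _).const_mul (f' x))
      |>.congr_deriv (by ring))
    hslope left_mem_uIcc right_mem_uIcc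
  rw [Real.norm_eq_abs, Real.norm_eq_abs] at hrem
  calc |f y - f x - f' x * (y - x)| = |f y - f' x * y - (f x - f' x * x)| := by ring_nf
    _ ≤ B * |y - x| * |y - x| := hrem
    _ = B * (y - x) ^ 2 := by rw [mul_assoc, ← sq, sq_abs]

/-- On an interval of length at most `1/K`, `|f''| ≤ K |f'|` and `|f'|` varies by a factor at most
`e`. -/
theorem abs_deriv_le_mul_exp_one_mul_abs {I : Set ℝ} (hI : Convex ℝ I)
    (hf' : ∀ t ∈ I, HasDerivWithinAt f' (f'' t) I t) (hne : ∀ t ∈ I, f' t ≠ 0) {K : ℝ}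
    (hK : ∀ t ∈ I, |f'' t / f' t| ≤ K) {a b : ℝ} (habI : Icc a b ⊆ I) (hKab : K * (b - a) ≤ 1)
    {ξ t : ℝ} (hξ : ξ ∈ Icc a b) (ht : t ∈ Icc a b) : |f'' t| ≤ K * exp 1 * |f' ξ| := by
  have hK0 : 0 ≤ K := (abs_nonneg _).trans (hK t (habI ht))
  have hdist : K * |t - ξ| ≤ 1 := by
    have : |t - ξ| ≤ b - a := abs_sub_le_iff.2 ⟨by linarith [ht.2, hξ.1], by linarith [ht.1, hξ.2]⟩
    nlinarith
  have hgrow : |f' t| ≤ exp 1 * |f' ξ| :=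
    (hI.abs_le_exp_mul_abs_of_abs_div_le hf' hne hK (habI ht) (habI hξ)).trans
      (mul_le_mul_of_nonneg_right (exp_le_exp.2 hdist) (abs_nonneg _))
  calc |f'' t| = |f'' t / f' t| * |f' t| := by
        rw [← abs_mul, div_mul_cancel₀ _ (hne t (habI ht))]
    _ ≤ K * (exp 1 * |f' ξ|) := mul_le_mul (hK t (habI ht)) hgrow (abs_nonneg _) hK0
    _ = K * exp 1 * |f' ξ| := by ring

end Calculus

theorem mem_Icc_vmin_vmax {k : ℕ} (x : Fin (k+1) → ℝ) (i : Fin (k+1)) :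
    x i ∈ Icc (vmin x) (vmax x) :=
  ⟨Finset.inf'_le x (Finset.mem_univ i), Finset.le_sup' x (Finset.mem_univ i)⟩

theorem Icc_vmin_vmax_subset {k : ℕ} {I : Set ℝ} (hI : OrdConnected I) {x : Fin (k+1) → ℝ}
    (hx : ∀ i, x i ∈ I) : Icc (vmin x) (vmax x) ⊆ I := by
  obtain ⟨i₀, -, hmax⟩ := Finset.exists_mem_eq_sup' Finset.univ_nonempty x
  obtain ⟨i₁, -, hmin⟩ := Finset.exists_mem_eq_inf' Finset.univ_nonempty x
  rw [vmax, vmin, hmax, hmin]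
  exact hI.out (hx i₁) (hx i₀)

theorem stmt11_general (I : Set ℝ) (hI : Convex ℝ I) (K : ℝ)
    (f f' f'' : ℝ → ℝ)
    (hd1 : ∀ t ∈ I, HasDerivWithinAt f (f' t) I t)
    (hd2 : ∀ t ∈ I, HasDerivWithinAt f' (f'' t) I t)
    (hne : ∀ t ∈ I, f' t ≠ 0)
    (hbK : ∀ t ∈ I, |f'' t / f' t| ≤ K)
    (k : ℕ) (x : Fin (k+1) → ℝ) (hx : ∀ i, x i ∈ I)
    (hsmall : vmax x - vmin x < min (1/K) 1)
    (xbar : ℝ) (hxbar : xbar = (∑ i, x i) / (k+1))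
    (M : ℝ) (hMI : M ∈ I) (hM : f M = (∑ i, f (x i)) / (k+1)) :
    |M - xbar| ≤ ((3 + 7 * Real.exp 1) / 6) * K * (vmax x - vmin x)^2 := by
  set a := vmin x
  set b := vmax x
  have hcard : (Fintype.card (Fin (k+1)) : ℝ) = k + 1 := by simp
  rw [← hcard] at hxbar hM
  have hxab : ∀ i, x i ∈ Icc a b := mem_Icc_vmin_vmax x
  have habI : Icc a b ⊆ I := Icc_vmin_vmax_subset hI.ordConnected hx
  have hba : b - a < 1 / K := hsmall.trans_le (min_le_left _ _)
  have hK : 0 < K := one_div_pos.1 ((sub_nonneg.2 ((hxab 0).1.trans (hxab 0).2)).trans_lt hba)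
  have hKab : K * (b - a) ≤ 1 := by rw [lt_div_iff₀' hK] at hba; linarith
  have hxbarab : xbar ∈ Icc a b := hxbar ▸ (convex_Icc a b).sum_div_card_mem hxab
  have hMab : M ∈ Icc a b := (convex_Icc a b).mem_of_apply_eq_sum_div_card habI
    (fun t ht => (hd1 t (habI ht)).continuousWithinAt.mono habI)
    (hI.injOn_of_hasDerivWithinAt_ne_zero hd1 hne) hxab hMI hM
  obtain ⟨ξ, hξ, hmvt⟩ := hI.exists_mem_uIcc_sub_eq_mul_sub hd1 (habI hxbarab) (habI hMab)
  have hξab : ξ ∈ Icc a b := uIcc_subset_Icc hxbarab hMab hξ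
  have htaylor (i : Fin (k+1)) :
      |f (x i) - f xbar - f' xbar * (x i - xbar)| ≤ K * exp 1 * |f' ξ| * (b - a) ^ 2 :=
    ((convex_Icc a b).abs_sub_sub_mul_sub_le (fun t ht => (hd1 t (habI ht)).mono habI)
      (fun t ht => (hd2 t (habI ht)).mono habI)
      (fun t ht => abs_deriv_le_mul_exp_one_mul_abs hI hd2 hne hbK habI hKab hξab ht)
      hxbarab (hxab i)).trans <| mul_le_mul_of_nonneg_left
        (sq_le_sq' (by linarith [(hxab i).1, hxbarab.2]) (by linarith [(hxab i).2, hxbarab.1]))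
        (by positivity)
  have hmean := abs_sum_div_card_sub_le hxbar htaylor
  rw [← hM, hmvt, abs_mul] at hmean
  have hξpos : 0 < |f' ξ| := abs_pos.2 (hne ξ (habI hξab))
  calc |M - xbar| ≤ K * exp 1 * (b - a) ^ 2 :=
        le_of_mul_le_mul_left (by linarith [hmean]) hξpos
    _ ≤ ((3 + 7 * Real.exp 1) / 6) * K * (b - a) ^ 2 := by
        rw [mul_comm K]
        gcongr
        linarith [exp_pos 1]

/-- if `f ∈ C²(I)`, `f' ≠ 0`, `f''` of locally bounded variation,
    `|f''/f'| ≤ K` on `I`, and `max x − min x < min(1/K, 1)`, then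
    `|M_f(x) − x̄| ≤ ((3 + 7e)/6)·K·(max x − min x)²`, where `M` is the
    quasi-arithmetic mean, characterized by `M ∈ I`, `f M = (Σ f(xᵢ))/k`,
    and `x̄` the arithmetic mean. -/
theorem stmt11 (I : Set ℝ) (hI : Convex ℝ I) (K : ℝ) (hK : 0 < K)
    (f f' f'' : ℝ → ℝ)
    (hd1 : ∀ t ∈ I, HasDerivWithinAt f (f' t) I t)
    (hd2 : ∀ t ∈ I, HasDerivWithinAt f' (f'' t) I t)
    (hc : ContinuousOn f'' I)
    (hne : ∀ t ∈ I, f' t ≠ 0)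
    (hbv : LocallyBoundedVariationOn f'' I)
    (hbK : ∀ t ∈ I, |f'' t / f' t| ≤ K)
    (k : ℕ) (x : Fin (k+1) → ℝ) (hx : ∀ i, x i ∈ I)
    (hsmall : vmax x - vmin x < min (1/K) 1)
    (xbar : ℝ) (hxbar : xbar = (∑ i, x i) / (k+1)) (hxbarI : xbar ∈ I)
    (M : ℝ) (hMI : M ∈ I) (hM : f M = (∑ i, f (x i)) / (k+1)) :
    |M - xbar| ≤ ((3 + 7 * Real.exp 1) / 6) * K * (vmax x - vmin x)^2 :=
  stmt11_general I hI K f f' f'' hd1 hd2 hne hbK k x hx hsmall xbar hxbar M hMI hM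
end
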